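/- arXiv:1811.00456 — 10 statements merged into one kernel-verified Lean document; each statement's English description precedes it below -/
import Mathlib

section
/- In the free associative ℂ-algebra ℂ⟨x_1,…,x_N⟩ on N noncommuting generators, the subalgebra generated by the power sum symmetric polynomials {p_k : k ≥ 1} is equal to the ℂ-linear span of the set {1} ∪ {P_u : u a nonempty finite sequence of positive integers}. -/
open scoped BigOperators

/-- The power sum symmetric polynomial `p_k = ∑_{i=1}^N x_i^k` in the free
associative `ℂ`-algebra on `N` noncommuting generators. -/
noncomputable def powerSum (N : ℕ) (k : ℕ) : FreeAlgebra ℂ (Fin N) :=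
  ∑ i : Fin N, FreeAlgebra.ι ℂ i ^ k

/-- For a finite sequence `u = (u_1, …, u_r)` of exponents, the symmetric polynomial
`P_u = ∑ x_{i(1)}^{u_1} ⋯ x_{i(r)}^{u_r}`, the sum over all `i : Fin r → Fin N`
with neighboring indices distinct. -/
noncomputable def Pu (N : ℕ) {r : ℕ} (u : Fin r → ℕ) : FreeAlgebra ℂ (Fin N) :=
  ∑ i ∈ Finset.univ.filter
      (fun i : Fin r → Fin N => ∀ j k : Fin r, (k : ℕ) = (j : ℕ) + 1 → i j ≠ i k),
    (List.ofFn fun j : Fin r => FreeAlgebra.ι ℂ (i j) ^ u j).prod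

/-! ### Auxiliary lemmas -/

lemma nd_cons {N r : ℕ} (a : Fin N) (i : Fin (r+1) → Fin N) :
    (∀ j k : Fin (r+2), (k:ℕ) = (j:ℕ)+1 →
      (Fin.cons a i : Fin (r+2) → Fin N) j ≠ (Fin.cons a i : Fin (r+2) → Fin N) k) ↔
    (a ≠ i 0 ∧ ∀ j k : Fin (r+1), (k:ℕ) = (j:ℕ)+1 → i j ≠ i k) := by
  constructor
  · intro h
    refine ⟨?_, ?_⟩
    · have := h 0 (Fin.succ 0) (by simp)
      simpa using this
    · intro j k hk
      have := h j.succ k.succ (by simp [hk])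
      simpa using this
  · rintro ⟨h0, h⟩ j k hk
    induction k using Fin.cases with
    | zero => simp at hk
    | succ k' =>
      induction j using Fin.cases with
      | zero =>
        have hk0 : k' = 0 := by
          have : (k' : ℕ) = 0 := by simpa using hk
          exact Fin.ext this
        subst hk0
        simpa using h0
      | succ j' =>
        simp only [Fin.cons_succ]
        exact h j' k' (by simpa using hk)

lemma word_cons {N r : ℕ} (a : Fin N) (i : Fin (r+1) → Fin N) (k : ℕ) (u : Fin (r+1) → ℕ) :
    (List.ofFn fun j : Fin (r+2) =>
        FreeAlgebra.ι ℂ ((Fin.cons a i : Fin (r+2) → Fin N) j)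
          ^ (Fin.cons k u : Fin (r+2) → ℕ) j).prod
    = FreeAlgebra.ι ℂ a ^ k * (List.ofFn fun j : Fin (r+1) => FreeAlgebra.ι ℂ (i j) ^ u j).prod := by
  rw [List.ofFn_succ]
  simp [Fin.cons_succ, Fin.cons_zero]

lemma word_update {N r : ℕ} (i : Fin (r+1) → Fin N) (k : ℕ) (u : Fin (r+1) → ℕ) :
    (List.ofFn fun j : Fin (r+1) =>
        FreeAlgebra.ι ℂ (i j) ^ (Function.update u 0 (k + u 0)) j).prod
    = FreeAlgebra.ι ℂ (i 0) ^ k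
        * (List.ofFn fun j : Fin (r+1) => FreeAlgebra.ι ℂ (i j) ^ u j).prod := by
  rw [List.ofFn_succ, List.ofFn_succ (f := fun j : Fin (r+1) => FreeAlgebra.ι ℂ (i j) ^ u j)]
  have h0 : Function.update u 0 (k + u 0) 0 = k + u 0 := by simp
  have hs : ∀ j : Fin r, Function.update u 0 (k + u 0) j.succ = u j.succ := by
    intro j; exact Function.update_of_ne (Fin.succ_ne_zero j) _ _
  simp only [h0, hs, List.prod_cons, pow_add, mul_assoc]

lemma Pu_single {N : ℕ} (u : Fin 1 → ℕ) : Pu N u = powerSum N (u 0) := by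
  rw [Pu, powerSum]
  rw [Finset.filter_true_of_mem (fun i _ => by intro j k hk; exact absurd hk (by omega))]
  rw [← Equiv.sum_comp (Equiv.funUnique (Fin 1) (Fin N)).symm]
  simp [Equiv.funUnique]

/-- The key recursion: `p_k ⬝ P_u = P_{(k,u)} + P_{(k+u_0, u_1, …)}`. -/
lemma key {N : ℕ} (k : ℕ) {r : ℕ} (u : Fin (r+1) → ℕ) :
    powerSum N k * Pu N u
      = Pu N (Fin.cons k u) + Pu N (Function.update u 0 (k + u 0)) := by
  classical
  set w : (Fin (r+1) → Fin N) → FreeAlgebra ℂ (Fin N) :=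
    fun i => (List.ofFn fun j : Fin (r+1) => FreeAlgebra.ι ℂ (i j) ^ u j).prod with hw
  set nd : (Fin (r+1) → Fin N) → Prop :=
    fun i => ∀ j k : Fin (r+1), (k:ℕ) = (j:ℕ)+1 → i j ≠ i k with hnd
  have hcons : Pu N (Fin.cons k u)
      = ∑ a : Fin N, ∑ i : Fin (r+1) → Fin N,
          if a ≠ i 0 ∧ nd i then FreeAlgebra.ι ℂ a ^ k * w i else 0 := by
    rw [Pu, Finset.sum_filter,
      ← Equiv.sum_comp (Fin.consEquiv (fun _ : Fin (r+2) => Fin N)), Fintype.sum_prod_type]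
    refine Finset.sum_congr rfl fun a _ => Finset.sum_congr rfl fun i _ => ?_
    simp only [Fin.consEquiv_apply]
    rw [if_congr (nd_cons a i) (word_cons a i k u) rfl]
  have hupd : Pu N (Function.update u 0 (k + u 0))
      = ∑ i : Fin (r+1) → Fin N,
          if nd i then FreeAlgebra.ι ℂ (i 0) ^ k * w i else 0 := by
    rw [Pu, Finset.sum_filter]
    refine Finset.sum_congr rfl fun i _ => ?_
    rw [word_update]
  have hlhs : powerSum N k * Pu N u
      = ∑ a : Fin N, ∑ i : Fin (r+1) → Fin N,
          if nd i then FreeAlgebra.ι ℂ a ^ k * w i else 0 := by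
    rw [powerSum, Pu, Finset.sum_filter, Finset.sum_mul_sum]
    refine Finset.sum_congr rfl fun a _ => Finset.sum_congr rfl fun i _ => ?_
    rw [mul_ite, mul_zero]
  rw [hlhs, hcons, hupd, Finset.sum_comm,
    Finset.sum_comm (f := fun a i => if a ≠ i 0 ∧ nd i then FreeAlgebra.ι ℂ a ^ k * w i else 0),
    ← Finset.sum_add_distrib]
  refine Finset.sum_congr rfl fun i _ => ?_
  by_cases h : nd i
  · have e1 : ∀ a : Fin N, (if nd i then FreeAlgebra.ι ℂ a ^ k * w i else 0)
        = FreeAlgebra.ι ℂ a ^ k * w i := fun a => if_pos h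
    have e2 : ∀ a : Fin N, (if a ≠ i 0 ∧ nd i then FreeAlgebra.ι ℂ a ^ k * w i else 0)
        = if a ≠ i 0 then FreeAlgebra.ι ℂ a ^ k * w i else 0 :=
      fun a => if_congr (and_iff_left h) rfl rfl
    rw [Finset.sum_congr rfl (fun a _ => e1 a), Finset.sum_congr rfl (fun a _ => e2 a),
      if_pos h]
    have hsplit : ∀ a : Fin N, FreeAlgebra.ι ℂ a ^ k * w i
        = (if a ≠ i 0 then FreeAlgebra.ι ℂ a ^ k * w i else 0)
          + (if a = i 0 then FreeAlgebra.ι ℂ a ^ k * w i else 0) := by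
      intro a; by_cases ha : a = i 0 <;> simp [ha]
    rw [Finset.sum_congr rfl (fun a _ => hsplit a), Finset.sum_add_distrib,
      Finset.sum_ite_eq' Finset.univ (i 0) (fun a => FreeAlgebra.ι ℂ a ^ k * w i)]
    simp
  · have e2 : ∀ a : Fin N, (if a ≠ i 0 ∧ nd i then FreeAlgebra.ι ℂ a ^ k * w i else 0) = 0 :=
      fun a => if_neg fun hc => h hc.2
    simp only [if_neg h, e2, Finset.sum_const_zero, add_zero]

/-- The generating set on the right-hand side. -/
def GSet (N : ℕ) : Set (FreeAlgebra ℂ (Fin N)) :=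
  {1} ∪ {y : FreeAlgebra ℂ (Fin N) |
    ∃ (r : ℕ) (_ : 0 < r) (u : Fin r → ℕ), (∀ j, 1 ≤ u j) ∧ y = Pu N u}

lemma tail_pos {r : ℕ} (u : Fin (r+2) → ℕ) (hu : ∀ j, 1 ≤ u j) :
    ∀ j, 1 ≤ Fin.tail u j := fun j => hu j.succ

lemma upd_pos {r : ℕ} (u : Fin (r+1) → ℕ) (hu : ∀ j, 1 ≤ u j) (k : ℕ) :
    ∀ j, 1 ≤ Function.update u 0 (k + u 0) j := by
  intro j
  rcases eq_or_ne j 0 with h | h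
  · subst h
    have := hu 0
    simp
    omega
  · rw [Function.update_of_ne h]; exact hu j

lemma Pu_mem_G (N : ℕ) {r : ℕ} (u : Fin (r+1) → ℕ) (hu : ∀ j, 1 ≤ u j) :
    Pu N u ∈ GSet N :=
  Or.inr ⟨r+1, Nat.succ_pos r, u, hu, rfl⟩

lemma powerSum_mem_G (N : ℕ) {k : ℕ} (hk : 1 ≤ k) : powerSum N k ∈ GSet N := by
  have h : Pu N (fun _ : Fin 1 => k) = powerSum N k := Pu_single _
  rw [← h]
  exact Pu_mem_G N _ fun _ => hk

lemma Pu_decomp (N : ℕ) {r : ℕ} (u : Fin (r+2) → ℕ) :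
    Pu N u = powerSum N (u 0) * Pu N (Fin.tail u)
      - Pu N (Function.update (Fin.tail u) 0 (u 0 + Fin.tail u 0)) := by
  have h := key (N := N) (u 0) (Fin.tail u)
  rw [Fin.cons_self_tail] at h
  rw [eq_sub_iff_add_eq]
  exact h.symm

lemma Pu_mem_adjoin (N : ℕ) {r : ℕ} (u : Fin (r+1) → ℕ) (hu : ∀ j, 1 ≤ u j) :
    Pu N u ∈ Algebra.adjoin ℂ
      {y : FreeAlgebra ℂ (Fin N) | ∃ k : ℕ, 1 ≤ k ∧ y = powerSum N k} := by
  induction r with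
  | zero =>
      rw [Pu_single]
      exact Algebra.subset_adjoin ⟨u 0, hu 0, rfl⟩
  | succ r ih =>
      rw [Pu_decomp]
      exact sub_mem
        (mul_mem (Algebra.subset_adjoin ⟨u 0, hu 0, rfl⟩) (ih _ (tail_pos u hu)))
        (ih _ (upd_pos _ (tail_pos u hu) _))

lemma powerSum_mul_mem_span (N : ℕ) {k : ℕ} (hk : 1 ≤ k) {m : FreeAlgebra ℂ (Fin N)}
    (hm : m ∈ Submodule.span ℂ (GSet N)) :
    powerSum N k * m ∈ Submodule.span ℂ (GSet N) := by
  induction hm using Submodule.span_induction with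
  | mem x hx =>
      rcases hx with h1 | ⟨r, hr, v, hv, rfl⟩
      · rw [Set.mem_singleton_iff] at h1
        subst h1
        rw [mul_one]
        exact Submodule.subset_span (powerSum_mem_G N hk)
      · cases r with
        | zero => omega
        | succ r' =>
            rw [key]
            exact add_mem
              (Submodule.subset_span (Pu_mem_G N _ (Fin.cases hk hv)))
              (Submodule.subset_span (Pu_mem_G N _ (upd_pos v hv k)))
  | zero => rw [mul_zero]; exact zero_mem _
  | add x y _ _ hx hy => rw [mul_add]; exact add_mem hx hy
  | smul c x _ hx => rw [mul_smul_comm]; exact Submodule.smul_mem _ _ hx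

lemma Pu_mul_Pu_mem_span (N : ℕ) {r : ℕ} (u : Fin (r+1) → ℕ) (hu : ∀ j, 1 ≤ u j)
    {s : ℕ} (v : Fin (s+1) → ℕ) (hv : ∀ j, 1 ≤ v j) :
    Pu N u * Pu N v ∈ Submodule.span ℂ (GSet N) := by
  induction r with
  | zero =>
      rw [Pu_single]
      exact powerSum_mul_mem_span N (hu 0) (Submodule.subset_span (Pu_mem_G N v hv))
  | succ r ih =>
      rw [Pu_decomp, sub_mul, mul_assoc]
      exact sub_mem
        (powerSum_mul_mem_span N (hu 0) (ih _ (tail_pos u hu)))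
        (ih _ (upd_pos _ (tail_pos u hu) _))

/-- In `ℂ⟨x_1,…,x_N⟩`, the subalgebra generated by the power sums `{p_k : k ≥ 1}`
equals the linear span of `{1} ∪ {P_u : u a nonempty finite sequence of positive integers}`. -/
theorem stmt0 (N : ℕ) (hN : 1 ≤ N) :
    Subalgebra.toSubmodule
        (Algebra.adjoin ℂ {y : FreeAlgebra ℂ (Fin N) | ∃ k : ℕ, 1 ≤ k ∧ y = powerSum N k})
      = Submodule.span ℂ
          ({1} ∪ {y : FreeAlgebra ℂ (Fin N) |
            ∃ (r : ℕ) (_ : 0 < r) (u : Fin r → ℕ), (∀ j, 1 ≤ u j) ∧ y = Pu N u}) := by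
  show _ = Submodule.span ℂ (GSet N)
  apply le_antisymm
  · -- adjoin ≤ span
    intro x hx
    have hx' : x ∈ Algebra.adjoin ℂ
        {y : FreeAlgebra ℂ (Fin N) | ∃ k : ℕ, 1 ≤ k ∧ y = powerSum N k} := hx
    clear hx
    have hmul : ∀ a b : FreeAlgebra ℂ (Fin N), a ∈ Submodule.span ℂ (GSet N) →
        b ∈ Submodule.span ℂ (GSet N) → a * b ∈ Submodule.span ℂ (GSet N) := by
      intro a b ha hb
      have h1 : a * b ∈ Submodule.span ℂ (GSet N) * Submodule.span ℂ (GSet N) :=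
        Submodule.mul_mem_mul ha hb
      rw [Submodule.span_mul_span] at h1
      refine Submodule.span_le.2 ?_ h1
      rintro z hz
      rw [Set.mem_mul] at hz
      obtain ⟨g, hg, h, hh, rfl⟩ := hz
      rcases hg with hg1 | ⟨r, hr, u, hu, rfl⟩
      · rw [Set.mem_singleton_iff] at hg1; subst hg1
        rw [one_mul]
        exact Submodule.subset_span hh
      · rcases hh with hh1 | ⟨s, hs, v, hv, rfl⟩
        · rw [Set.mem_singleton_iff] at hh1; subst hh1
          rw [mul_one]
          cases r with
          | zero => omega
          | succ r' => exact Submodule.subset_span (Pu_mem_G N u hu)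
        · cases r with
          | zero => omega
          | succ r' =>
            cases s with
            | zero => omega
            | succ s' => exact Pu_mul_Pu_mem_span N u hu v hv
    induction hx' using Algebra.adjoin_induction with
    | mem y hy =>
        obtain ⟨k, hk, rfl⟩ := hy
        exact Submodule.subset_span (powerSum_mem_G N hk)
    | algebraMap c =>
        rw [Algebra.algebraMap_eq_smul_one]
        exact Submodule.smul_mem _ _ (Submodule.subset_span (Or.inl rfl))
    | add x y _ _ hx hy => exact add_mem hx hy
    | mul x y _ _ hx hy => exact hmul x y hx hy
  · -- span ≤ adjoin
    rw [Submodule.span_le]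
    rintro y (h1 | ⟨r, hr, u, hu, rfl⟩)
    · rw [Set.mem_singleton_iff] at h1; subst h1
      exact Subalgebra.one_mem _
    · cases r with
      | zero => omega
      | succ r' => exact Pu_mem_adjoin N u hu
end

section
/- If N ≥ 2, then in the free associative ℂ-algebra ℂ⟨x_1,…,x_N⟩ the family of polynomials (P_u), indexed by all nonempty finite sequences u of positive integers, is linearly independent over ℂ. -/
open scoped BigOperators

/-- `P_u` indexed by a nonempty list `u` of positive integers. -/
noncomputable def Pl (N : ℕ) (u : List ℕ) : FreeAlgebra ℂ (Fin N) :=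
  Pu N u.get

/-!
Fix distinct letters `a ≠ b` and, for each `u`, the alternating word
`w_u = x_a^{u_1} x_b^{u_2} x_a^{u_3} ⋯`. Every monomial of `P_v` is a word whose run-length
encoding is `((i(1), v_1), …, (i(r), v_r))`: neighbouring letters differ and exponents are
positive. Run-length encodings are unique, so `w_u` occurs in `P_v` exactly when `v = u`, and
then only for the alternating choice of indices, with coefficient `1`. The coefficient
functionals at the words `w_u` therefore form a dual family to `(P_u)`.
-/

namespace List
variable {α : Type*}

def expandRuns (p : List (α × ℕ)) : List α := p.flatMap fun x => replicate x.2 x.1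

@[simp] lemma expandRuns_nil : expandRuns ([] : List (α × ℕ)) = [] := rfl

@[simp] lemma expandRuns_cons (x : α × ℕ) (p : List (α × ℕ)) :
    expandRuns (x :: p) = replicate x.2 x.1 ++ expandRuns p := rfl

def IsRunEncoding (p : List (α × ℕ)) : Prop :=
  p.IsChain (fun x y => x.1 ≠ y.1) ∧ ∀ x ∈ p, 0 < x.2

lemma isRunEncoding_cons {x : α × ℕ} {p : List (α × ℕ)} :
    IsRunEncoding (x :: p) ↔ (∀ y ∈ p.head?, x.1 ≠ y.1) ∧ 0 < x.2 ∧ IsRunEncoding p := by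
  simp only [IsRunEncoding, isChain_cons, mem_cons, forall_eq_or_imp]
  tauto

lemma IsRunEncoding.head?_expandRuns {p : List (α × ℕ)} (hp : IsRunEncoding p) :
    (expandRuns p).head? = p.head?.map Prod.fst := by
  obtain _ | ⟨⟨a, _ | n⟩, p⟩ := p
  · rfl
  · exact absurd (isRunEncoding_cons.1 hp).2.1 (lt_irrefl 0)
  · simp [replicate_succ]

lemma replicate_append_inj {a : α} {n m : ℕ} {s t : List α} (hs : a ∉ s.head?)
    (ht : a ∉ t.head?) : replicate n a ++ s = replicate m a ++ t ↔ n = m ∧ s = t := by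
  induction n generalizing m with
  | zero =>
    cases m with
    | zero => simp
    | succ m => simp only [replicate_succ, cons_append, nil_append, replicate_zero]; aesop
  | succ n ih =>
    cases m with
    | zero => simp only [replicate_succ, cons_append, nil_append, replicate_zero]; aesop
    | succ m => simp [replicate_succ, ih]

lemma IsRunEncoding.notMem_head?_expandRuns {p : List (α × ℕ)} (hp : IsRunEncoding p) {a : α}
    (ha : ∀ y ∈ p.head?, a ≠ y.1) : a ∉ (expandRuns p).head? := by
  rw [hp.head?_expandRuns]
  aesop

lemma IsRunEncoding.head?_expandRuns_eq {p q : List (α × ℕ)} (hp : IsRunEncoding p)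
    (hq : IsRunEncoding q) (h : expandRuns p = expandRuns q) :
    p.head?.map Prod.fst = q.head?.map Prod.fst := by
  rw [← hp.head?_expandRuns, ← hq.head?_expandRuns, h]

lemma expandRuns_injOn : Set.InjOn (expandRuns (α := α)) {p | IsRunEncoding p} := by
  intro p hp q hq h
  induction p generalizing q with
  | nil =>
    obtain _ | ⟨y, q⟩ := q
    · rfl
    · simpa using IsRunEncoding.head?_expandRuns_eq hp hq h
  | cons x p ih =>
    have heads := IsRunEncoding.head?_expandRuns_eq hp hq h
    obtain _ | ⟨⟨b, m⟩, q⟩ := q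
    · simp at heads
    obtain ⟨a, n⟩ := x
    obtain rfl : a = b := by simpa using heads
    obtain ⟨ha, -, hp'⟩ := isRunEncoding_cons.1 hp
    obtain ⟨ha', -, hq'⟩ := isRunEncoding_cons.1 hq
    obtain ⟨rfl, h'⟩ := (replicate_append_inj (hp'.notMem_head?_expandRuns ha)
      (hq'.notMem_head?_expandRuns ha')).1 h
    rw [ih hp' hq' h']

lemma prod_map_expandRuns {M : Type*} [Monoid M] (f : α → M) (p : List (α × ℕ)) :
    ((expandRuns p).map f).prod = (p.map fun x => f x.1 ^ x.2).prod := by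
  induction p <;> simp [*]

lemma isRunEncoding_ofFn {r : ℕ} {i : Fin r → α} {v : Fin r → ℕ}
    (hi : ∀ j k : Fin r, (k : ℕ) = j + 1 → i j ≠ i k) (hv : ∀ j, 0 < v j) :
    IsRunEncoding (ofFn fun j => (i j, v j)) := by
  refine ⟨isChain_ofFn.2 fun j hj => hi _ _ rfl, ?_⟩
  simp only [mem_ofFn', Set.mem_range]
  rintro _ ⟨j, rfl⟩
  exact hv j

end List

namespace FreeAlgebra

lemma basisFreeMonoid_ofList (R : Type*) {X : Type*} [CommSemiring R] (l : List X) :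
    basisFreeMonoid R X (FreeMonoid.ofList l) = (l.map (ι R)).prod := by
  simp [basisFreeMonoid, equivMonoidAlgebraFreeMonoid]

end FreeAlgebra

namespace Fin

def alternating {α : Type*} (a b : α) {r : ℕ} (j : Fin r) : α := if Even (j : ℕ) then a else b

lemma alternating_ne {α : Type*} {a b : α} (hab : a ≠ b) {r : ℕ} (j k : Fin r)
    (hjk : (k : ℕ) = j + 1) : alternating a b j ≠ alternating a b k := by
  unfold alternating
  rw [hjk]
  split_ifs <;> grind

end Fin

section

open List FreeAlgebra Fin

variable {N : ℕ}

def alternatingWord (a b : Fin N) (u : List ℕ) : FreeMonoid (Fin N) :=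
  FreeMonoid.ofList (expandRuns (ofFn fun j => (alternating a b j, u.get j)))

lemma Pu_eq_sum {r : ℕ} (v : Fin r → ℕ) :
    Pu N v = ∑ i ∈ Finset.univ.filter
      (fun i : Fin r → Fin N => ∀ j k : Fin r, (k : ℕ) = (j : ℕ) + 1 → i j ≠ i k),
    basisFreeMonoid ℂ (Fin N) (FreeMonoid.ofList (expandRuns (ofFn fun j => (i j, v j)))) := by
  refine Finset.sum_congr rfl fun i _ => ?_
  rw [basisFreeMonoid_ofList, prod_map_expandRuns, map_ofFn]
  rfl

lemma coord_alternatingWord_Pl {a b : Fin N} (hab : a ≠ b) {u v : List ℕ}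
    (hu : ∀ n ∈ u, 0 < n) (hv : ∀ n ∈ v, 0 < n) :
    (basisFreeMonoid ℂ (Fin N)).coord (alternatingWord a b u) (Pl N v) =
      if v = u then 1 else 0 := by
  classical
  have hrun : ∀ {w : List ℕ} (i : Fin w.length → Fin N), (∀ n ∈ w, 0 < n) →
      (∀ j k : Fin w.length, (k : ℕ) = j + 1 → i j ≠ i k) →
      IsRunEncoding (ofFn fun j => (i j, w.get j)) :=
    fun i hw hi => isRunEncoding_ofFn hi fun j => hw _ (get_mem _ _)
  have hrun₀ := hrun (alternating a b) hu (alternating_ne hab)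
  rw [Pl, Pu_eq_sum, map_sum]
  simp only [Module.Basis.coord_apply, Module.Basis.repr_self, Finsupp.single_apply,
    alternatingWord, EmbeddingLike.apply_eq_iff_eq]
  by_cases hvu : v = u
  · subst hvu
    rw [Finset.sum_eq_single_of_mem (alternating a b) (by simpa using alternating_ne hab)]
    · simp
    intro i hi hne
    refine if_neg fun h => hne (ofFn_injective ?_)
    simpa [map_ofFn, Function.comp_def] using
      congrArg (map Prod.fst) (expandRuns_injOn (hrun i hv (by simpa using hi)) hrun₀ h)
  · refine (Finset.sum_eq_zero fun i hi => if_neg fun h => hvu ?_).trans (if_neg hvu).symm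
    simpa [map_ofFn, Function.comp_def] using
      congrArg (map Prod.snd) (expandRuns_injOn (hrun i hv (by simpa using hi)) hrun₀ h)

end

/-- If `N ≥ 2`, the family `(P_u)`, indexed by nonempty finite sequences of positive
integers, is linearly independent over `ℂ` in `ℂ⟨x_1,…,x_N⟩`. -/
theorem stmt1 (N : ℕ) (hN : 2 ≤ N) :
    LinearIndependent ℂ
      (fun u : {l : List ℕ // l ≠ [] ∧ ∀ n ∈ l, 1 ≤ n} => Pl N u.1) := by
  classical
  obtain ⟨a, b, hab⟩ : ∃ a b : Fin N, a ≠ b := ⟨⟨0, by omega⟩, ⟨1, by omega⟩, by simp⟩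
  let coeffs : FreeAlgebra ℂ (Fin N) →ₗ[ℂ] ({l : List ℕ // l ≠ [] ∧ ∀ n ∈ l, 1 ≤ n} → ℂ) :=
    LinearMap.pi fun u => (FreeAlgebra.basisFreeMonoid ℂ (Fin N)).coord (alternatingWord a b u.1)
  have hdual : coeffs ∘ (fun u => Pl N u.1) = fun v => Pi.single v 1 := by
    funext v u
    simp [coeffs, Pi.single_apply, coord_alternatingWord_Pl hab u.2.2 v.2.2, Subtype.ext_iff,
      eq_comm]
  exact LinearIndependent.of_comp coeffs (hdual ▸ Pi.linearIndependent_single_one _ ℂ)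
end

section
/- Let R be a (not necessarily commutative) ring, x_1,…,x_N ∈ R, and let u = (u_1,…,u_r) be a nonempty finite sequence of positive integers. Then P_u = ∑_{c} (−1)^{r − s} p_{(u·c)_1} p_{(u·c)_2} ⋯ p_{(u·c)_s} (ordered product), where the sum ranges over all compositions c = (m_1,…,m_s) of r. -/
open scoped BigOperators

/-- The power sum `p_k = ∑_{i=1}^N x_i^k` of elements `x_1, …, x_N` of a ring. -/
def pSum {R : Type*} [Ring R] {N : ℕ} (x : Fin N → R) (k : ℕ) : R :=
  ∑ i : Fin N, x i ^ k

/-- For a finite sequence `u = (u_1, …, u_r)` of exponents,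
`P_u = ∑ x_{i(1)}^{u_1} ⋯ x_{i(r)}^{u_r}`, the sum over all `i : Fin r → Fin N`
with neighboring indices distinct. -/
def PPoly {R : Type*} [Ring R] {N : ℕ} (x : Fin N → R) {r : ℕ} (u : Fin r → ℕ) : R :=
  ∑ i ∈ Finset.univ.filter
      (fun i : Fin r → Fin N => ∀ j k : Fin r, (k : ℕ) = (j : ℕ) + 1 → i j ≠ i k),
    (List.ofFn fun j : Fin r => x (i j) ^ u j).prod

/-- For a composition `c` of `r`, the sequence `u·c` of length `c.length` whose `j`-th
entry is the sum of the entries of `u` over the `j`-th consecutive block of `c`. -/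
def blockSum {r : ℕ} (u : Fin r → ℕ) (c : Composition r) : Fin c.length → ℕ :=
  fun j => ∑ t : Fin (c.blocksFun j), u (c.embedding j t)

/-! ### Auxiliary composition machinery -/

lemma comp_blocks_ne_nil {n : ℕ} (c : Composition (n + 1)) : c.blocks ≠ [] := by
  intro h
  have := c.blocks_sum
  rw [h] at this
  simp at this

/-- Prepend a block of size 1 to a composition. -/
def ext1 {n : ℕ} (c : Composition n) : Composition (n + 1) :=
  ⟨1 :: c.blocks, by
    intro i hi
    rcases List.mem_cons.1 hi with h | h
    · omega
    · exact c.blocks_pos h, by simp [c.blocks_sum]; omega⟩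

/-- Increase the first block of a composition by 1. -/
def ext2 {n : ℕ} (c : Composition (n + 1)) : Composition (n + 2) :=
  ⟨(c.blocks.head (comp_blocks_ne_nil c) + 1) :: c.blocks.tail, by
    intro i hi
    rcases List.mem_cons.1 hi with h | h
    · omega
    · exact c.blocks_pos (List.mem_of_mem_tail h), by
    have hs := c.blocks_sum
    rw [← List.cons_head_tail (comp_blocks_ne_nil c), List.sum_cons] at hs
    simp [List.sum_cons]
    omega⟩

lemma ext1_length {n : ℕ} (c : Composition n) : (ext1 c).length = c.length + 1 := rfl

lemma ext2_length {n : ℕ} (c : Composition (n + 1)) : (ext2 c).length = c.length := by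
  show ((c.blocks.head _ + 1) :: c.blocks.tail).length = c.blocks.length
  rw [List.length_cons, List.length_tail]
  have := List.length_pos_iff.2 (comp_blocks_ne_nil c)
  omega

lemma head_pos {n : ℕ} (c : Composition (n + 1)) :
    0 < c.blocks.head (comp_blocks_ne_nil c) :=
  c.blocks_pos (List.head_mem _)

lemma comp_sum_split {M : Type*} [AddCommMonoid M] (n : ℕ) (f : Composition (n + 2) → M) :
    ∑ c, f c = (∑ c : Composition (n + 1), f (ext1 c))
      + ∑ c : Composition (n + 1), f (ext2 c) := by
  classical
  have hbij : Function.Bijective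
      (Sum.elim ext1 ext2 : Composition (n+1) ⊕ Composition (n+1) → Composition (n+2)) := by
    constructor
    · rintro (c | c) (c' | c') h <;> simp only [Sum.elim_inl, Sum.elim_inr] at h
      · congr 1
        ext1
        have : (1 : ℕ) :: c.blocks = 1 :: c'.blocks := congrArg Composition.blocks h
        exact (List.cons_injective this)
      · exfalso
        have : (1 : ℕ) :: c.blocks = _ :: c'.blocks.tail := congrArg Composition.blocks h
        have h1 := List.cons_eq_cons.1 this
        have := head_pos c'
        omega
      · exfalso
        have : _ :: c.blocks.tail = (1 : ℕ) :: c'.blocks := congrArg Composition.blocks h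
        have h1 := List.cons_eq_cons.1 this
        have := head_pos c
        omega
      · congr 1
        ext1
        have hb : (c.blocks.head (comp_blocks_ne_nil c) + 1) :: c.blocks.tail
            = (c'.blocks.head (comp_blocks_ne_nil c') + 1) :: c'.blocks.tail :=
          congrArg Composition.blocks h
        have h1 := List.cons_eq_cons.1 hb
        rw [← List.cons_head_tail (comp_blocks_ne_nil c),
          ← List.cons_head_tail (comp_blocks_ne_nil c')]
        rw [h1.2]
        congr 1
        omega
    · intro c
      obtain ⟨bl, hpos, hsum⟩ := c
      cases bl with
      | nil => simp at hsum
      | cons b t =>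
        rcases b with _ | b
        · exact absurd (hpos (List.mem_cons_self)) (by omega)
        rcases b with _ | b
        · refine ⟨Sum.inl ⟨t, fun h => hpos (List.mem_cons_of_mem _ h), by
            simp at hsum; omega⟩, rfl⟩
        · refine ⟨Sum.inr ⟨(b+1) :: t, ?_, ?_⟩, rfl⟩
          · intro i hi
            rcases List.mem_cons.1 hi with h | h
            · omega
            · exact hpos (List.mem_cons_of_mem _ h)
          · simp at hsum ⊢; omega
  rw [← Fintype.sum_bijective _ hbij _ f (fun s => rfl), Fintype.sum_sum_type]
  simp

instance : Unique (Composition 0) :=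
  ⟨⟨⟨[], by intro i hi; simp at hi, by simp⟩⟩, fun c => by
    obtain ⟨bl, hpos, hsum⟩ := c
    cases bl with
    | nil => rfl
    | cons b t =>
      exfalso
      have := hpos (List.mem_cons_self)
      simp at hsum
      omega⟩

instance : Unique (Composition 1) :=
  ⟨⟨⟨[1], by intro i hi; simp at hi; omega, by simp⟩⟩, fun c => by
    obtain ⟨bl, hpos, hsum⟩ := c
    cases bl with
    | nil => simp at hsum
    | cons b t =>
      cases t with
      | nil =>
        simp at hsum
        subst hsum
        rfl
      | cons b' t' =>
        exfalso
        have h1 := hpos (List.mem_cons_self)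
        have h2 := hpos (List.mem_cons_of_mem _ (List.mem_cons_self))
        simp at hsum
        omega⟩

lemma default_comp0_blocks : (default : Composition 0).blocks = [] := rfl
lemma default_comp1_blocks : (default : Composition 1).blocks = [1] := rfl

section Main

variable {R : Type*} [Ring R] {N : ℕ} (x : Fin N → R)

/-! ### The `PPoly` recursion -/

lemma PPoly_zero (u : Fin 0 → ℕ) : PPoly x u = 1 := by
  simp [PPoly]

lemma PPoly_one (u : Fin 1 → ℕ) : PPoly x u = pSum x (u 0) := by
  rw [PPoly]
  rw [Finset.filter_true_of_mem (by
    intro i _ j k hk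
    exact absurd hk (by omega))]
  rw [pSum]
  rw [← (Equiv.funUnique (Fin 1) (Fin N)).symm.sum_comp]
  simp [List.ofFn_succ]

lemma cond_cons (n : ℕ) (a : Fin N) (i' : Fin (n + 1) → Fin N) :
    (∀ j k : Fin (n + 2), (k : ℕ) = (j : ℕ) + 1 →
        (Fin.cons a i' : Fin (n+2) → Fin N) j ≠ (Fin.cons a i' : Fin (n+2) → Fin N) k) ↔
      (a ≠ i' 0 ∧ ∀ j k : Fin (n + 1), (k : ℕ) = (j : ℕ) + 1 → i' j ≠ i' k) := by
  constructor
  · intro h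
    constructor
    · have := h 0 (Fin.succ 0) (by simp)
      simpa using this
    · intro j k hk
      have := h j.succ k.succ (by simpa using by omega)
      simpa using this
  · rintro ⟨h0, h⟩ j k hk
    induction j using Fin.cases with
    | zero =>
      have hk1 : (k : ℕ) = 1 := by simpa using hk
      induction k using Fin.cases with
      | zero => simp at hk1
      | succ k' =>
        have : k' = 0 := by
          apply Fin.ext
          simpa using hk1
        subst this
        simpa using h0
    | succ j' =>
      induction k using Fin.cases with
      | zero => simp at hk
      | succ k' =>
        have : (k' : ℕ) = (j' : ℕ) + 1 := by simpa using hk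
        simpa using h j' k' this

lemma ite_and_sub {P Q : Prop} [Decidable P] [Decidable Q] (v : R) :
    (if P ∧ Q then v else 0) = (if Q then v else 0) - (if (¬P) ∧ Q then v else 0) := by
  by_cases hP : P <;> by_cases hQ : Q <;> simp [hP, hQ]

lemma PPoly_rec (n : ℕ) (u : Fin (n + 2) → ℕ) :
    PPoly x u = pSum x (u 0) * PPoly x (fun j => u j.succ)
      - PPoly x (Fin.cons (u 0 + u 1) (fun j => u j.succ.succ)) := by
  classical
  set Q : (Fin (n+1) → Fin N) → Prop :=
    fun i' => ∀ j k : Fin (n + 1), (k : ℕ) = (j : ℕ) + 1 → i' j ≠ i' k with hQ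
  set T' : (Fin (n+1) → Fin N) → R :=
    fun i' => (List.ofFn fun j : Fin (n+1) => x (i' j) ^ u j.succ).prod with hT'
  have key : PPoly x u
      = ∑ a : Fin N, ∑ i' : Fin (n+1) → Fin N,
          if (a ≠ i' 0 ∧ Q i') then x a ^ u 0 * T' i' else 0 := by
    rw [PPoly, Finset.sum_filter,
      ← (Fin.consEquiv (fun _ : Fin (n+2) => Fin N)).sum_comp, Fintype.sum_prod_type]
    refine Finset.sum_congr rfl fun a _ => Finset.sum_congr rfl fun i' _ => ?_
    simp only [Fin.consEquiv_apply]
    rw [if_congr (cond_cons n a i') rfl rfl]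
    congr 1
    rw [List.ofFn_succ]
    simp only [Fin.consEquiv_apply, Fin.cons_zero, Fin.cons_succ, List.prod_cons]
    rfl
  rw [key]
  have split : ∀ a : Fin N, ∀ i' : Fin (n+1) → Fin N,
      (if (a ≠ i' 0 ∧ Q i') then x a ^ u 0 * T' i' else 0)
        = (if Q i' then x a ^ u 0 * T' i' else 0)
          - (if (a = i' 0 ∧ Q i') then x a ^ u 0 * T' i' else 0) := by
    intro a i'
    rw [ite_and_sub]
    simp
  simp only [split, Finset.sum_sub_distrib]
  congr 1
  · rw [PPoly, Finset.sum_filter, pSum, Finset.sum_mul]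
    refine Finset.sum_congr rfl fun a _ => ?_
    rw [Finset.mul_sum]
    refine Finset.sum_congr rfl fun i' _ => ?_
    rw [mul_ite, mul_zero]
  · rw [Finset.sum_comm, PPoly, Finset.sum_filter]
    refine Finset.sum_congr rfl fun i' _ => ?_
    have : ∑ a : Fin N, (if (a = i' 0 ∧ Q i') then x a ^ u 0 * T' i' else 0)
        = if Q i' then x (i' 0) ^ u 0 * T' i' else 0 := by
      simp only [ite_and]
      rw [Finset.sum_ite_eq' Finset.univ (i' 0)
        (fun a => if Q i' then x a ^ u 0 * T' i' else 0)]
      simp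
    rw [this]
    congr 1
    show x (i' 0) ^ u 0 * (List.ofFn fun j : Fin (n + 1) => x (i' j) ^ u j.succ).prod = _
    rw [List.ofFn_succ, List.ofFn_succ]
    simp only [Fin.cons_zero, Fin.cons_succ, List.prod_cons, ← mul_assoc, ← pow_add,
      Fin.succ_zero_eq_one]

/-! ### The composition-sum side -/

def RHSl (x : Fin N → R) (l : List ℕ) : R :=
  ∑ c : Composition l.length,
    ((-1 : ℤ) ^ (l.length - c.length)) •
      ((l.splitWrtComposition c).map (fun s => pSum x s.sum)).prod

lemma RHSl_nil : RHSl x [] = 1 := by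
  have h : RHSl x [] = ∑ c : Composition 0,
      ((-1 : ℤ) ^ (0 - c.length)) •
        ((([] : List ℕ).splitWrtComposition c).map (fun s => pSum x s.sum)).prod := rfl
  rw [h, Fintype.sum_unique]
  simp [List.splitWrtComposition, List.splitWrtCompositionAux, Composition.length,
    default_comp0_blocks]
  rfl

lemma RHSl_single (a : ℕ) : RHSl x [a] = pSum x a := by
  have h : RHSl x [a] = ∑ c : Composition 1,
      ((-1 : ℤ) ^ (1 - c.length)) •
        (([a].splitWrtComposition c).map (fun s => pSum x s.sum)).prod := rfl
  rw [h, Fintype.sum_unique]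
  simp [List.splitWrtComposition, List.splitWrtCompositionAux, Composition.length,
    default_comp1_blocks]
  erw [default_comp1_blocks]
  simp [List.splitWrtCompositionAux]

lemma split_ext1 {α : Type*} (a : α) (l : List α) {n : ℕ} (c : Composition n) :
    (a :: l).splitWrtComposition (ext1 c) = [a] :: l.splitWrtComposition c := by
  simp only [List.splitWrtComposition, ext1]
  rw [List.splitWrtCompositionAux_cons]
  simp

lemma map_split_ext2 (a b : ℕ) (t : List ℕ) (c : Composition (t.length + 1)) :
    ((a :: b :: t).splitWrtComposition (ext2 c)).map (fun s => pSum x s.sum)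
      = (((a + b) :: t).splitWrtComposition c).map (fun s => pSum x s.sum) := by
  obtain ⟨hd, tl, hbl⟩ := List.exists_cons_of_ne_nil (comp_blocks_ne_nil c)
  have hpos : 0 < hd := c.blocks_pos (by rw [hbl]; exact List.mem_cons_self)
  obtain ⟨k, rfl⟩ : ∃ k, hd = k + 1 := ⟨hd - 1, by omega⟩
  have h2 : (ext2 c).blocks = (k + 2) :: tl := by
    show (c.blocks.head _ + 1) :: c.blocks.tail = _
    simp [hbl]
  simp only [List.splitWrtComposition, h2, hbl]
  rw [List.splitWrtCompositionAux_cons, List.splitWrtCompositionAux_cons]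
  simp only [List.take_succ_cons, List.drop_succ_cons, List.map_cons, List.sum_cons]
  congr 2
  omega

lemma RHSl_rec (a b : ℕ) (t : List ℕ) :
    RHSl x (a :: b :: t) = pSum x a * RHSl x (b :: t) - RHSl x ((a + b) :: t) := by
  rw [show RHSl x (a :: b :: t) = ∑ c : Composition (t.length + 2),
      ((-1 : ℤ) ^ (t.length + 2 - c.length)) •
        (((a :: b :: t).splitWrtComposition c).map (fun s => pSum x s.sum)).prod from rfl,
    comp_sum_split]
  rw [sub_eq_add_neg]
  congr 1
  · rw [show RHSl x (b :: t) = ∑ c : Composition (t.length + 1),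
        ((-1 : ℤ) ^ (t.length + 1 - c.length)) •
          (((b :: t).splitWrtComposition c).map (fun s => pSum x s.sum)).prod from rfl,
      Finset.mul_sum]
    refine Finset.sum_congr rfl fun c _ => ?_
    rw [split_ext1, ext1_length, mul_smul_comm,
      show t.length + 2 - (c.length + 1) = t.length + 1 - c.length by omega]
    congr 1
  · rw [show RHSl x ((a + b) :: t) = ∑ c : Composition (t.length + 1),
        ((-1 : ℤ) ^ (t.length + 1 - c.length)) •
          ((((a + b) :: t).splitWrtComposition c).map (fun s => pSum x s.sum)).prod from rfl,
      ← Finset.sum_neg_distrib]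
    refine Finset.sum_congr rfl fun c _ => ?_
    rw [ext2_length, map_split_ext2]
    have hle : c.length ≤ t.length + 1 := c.length_le
    have hpow : ((-1 : ℤ) ^ (t.length + 2 - c.length))
        = -((-1 : ℤ) ^ (t.length + 1 - c.length)) := by
      rw [show t.length + 2 - c.length = (t.length + 1 - c.length) + 1 by omega, pow_succ]
      ring
    rw [hpow, neg_smul]

/-! ### The common recursion -/

def Bfun (x : Fin N → R) : List ℕ → R
  | [] => 1
  | [a] => pSum x a
  | a :: b :: t => pSum x a * Bfun x (b :: t) - Bfun x ((a + b) :: t)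
  termination_by l => l.length
  decreasing_by all_goals simp

lemma B_eq_RHSl : ∀ l : List ℕ, Bfun x l = RHSl x l := by
  intro l
  induction l using Bfun.induct with
  | case1 => rw [Bfun, RHSl_nil]
  | case2 a => rw [Bfun, RHSl_single]
  | case3 a b t ih1 ih2 => rw [Bfun, ih1, ih2, RHSl_rec]

lemma PPoly_eq_B : ∀ (n : ℕ) (u : Fin n → ℕ), PPoly x u = Bfun x (List.ofFn u) := by
  intro n
  induction n with
  | zero =>
    intro u
    rw [PPoly_zero, List.ofFn_zero, Bfun]
  | succ n ih =>
    intro u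
    cases n with
    | zero =>
      rw [PPoly_one, show List.ofFn u = [u 0] from by simp [List.ofFn_succ], Bfun]
    | succ m =>
      rw [PPoly_rec, ih (fun j => u j.succ), ih (Fin.cons (u 0 + u 1) fun j => u j.succ.succ)]
      rw [show List.ofFn u = u 0 :: List.ofFn (fun j : Fin (m+1) => u j.succ) from by
        rw [List.ofFn_succ]]
      rw [show (List.ofFn fun j : Fin (m+1) => u j.succ)
          = u 1 :: List.ofFn (fun j : Fin m => u j.succ.succ) from by
        rw [List.ofFn_succ, Fin.succ_zero_eq_one]]
      rw [show List.ofFn (Fin.cons (u 0 + u 1) fun j : Fin m => u j.succ.succ)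
          = (u 0 + u 1) :: List.ofFn (fun j : Fin m => u j.succ.succ) from by
        rw [List.ofFn_succ]; simp]
      rw [Bfun]

/-! ### Transfer back to `blockSum` -/

lemma drop_take_ofFn {r : ℕ} (u : Fin r → ℕ) (c : Composition r) (j : ℕ) (hj : j < c.length) :
    ((List.ofFn u).take (c.sizeUpTo (j+1))).drop (c.sizeUpTo j)
      = List.ofFn (fun t : Fin (c.blocksFun ⟨j, hj⟩) => u (c.embedding ⟨j, hj⟩ t)) := by
  apply List.ext_getElem
  · have h1 := c.sizeUpTo_le (j + 1)
    have h2 := c.sizeUpTo_succ' ⟨j, hj⟩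
    rw [List.length_drop, List.length_take, List.length_ofFn, min_eq_left h1,
      List.length_ofFn, h2, Nat.add_sub_cancel_left]
  · intro t h1 h2
    rw [List.getElem_drop, List.getElem_take, List.getElem_ofFn, List.getElem_ofFn]
    exact congrArg u (Fin.ext (by simp [Composition.coe_embedding]))

lemma ofFn_blockSum {r : ℕ} (u : Fin r → ℕ) (c : Composition r) :
    (List.ofFn fun j : Fin c.length => pSum x (blockSum u c j))
      = ((List.ofFn u).splitWrtComposition c).map (fun s => pSum x s.sum) := by
  apply List.ext_getElem
  · simp
  · intro j h1 h2
    have hj : j < c.length := by simpa using h1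
    rw [List.getElem_ofFn, List.getElem_map, List.getElem_splitWrtComposition,
      drop_take_ofFn u c j hj]
    rw [List.sum_ofFn]
    rfl

lemma RHSl_cast (l : List ℕ) {r : ℕ} (h : l.length = r) :
    RHSl x l = ∑ c : Composition r,
      ((-1 : ℤ) ^ (r - c.length)) •
        ((l.splitWrtComposition c).map (fun s => pSum x s.sum)).prod := by
  subst h; rfl

end Main

/-- For a nonempty sequence `u = (u_1, …, u_r)` of positive integers,
`P_u = ∑_c (−1)^{r − s} p_{(u·c)_1} ⋯ p_{(u·c)_s}` (ordered product), the sum over all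
compositions `c = (m_1, …, m_s)` of `r`. -/
theorem stmt3 {R : Type*} [Ring R] {N : ℕ} (hN : 1 ≤ N) (x : Fin N → R)
    {r : ℕ} (hr : 0 < r) (u : Fin r → ℕ) (hu : ∀ j, 1 ≤ u j) :
    PPoly x u
      = ∑ c : Composition r,
          ((-1 : ℤ) ^ (r - c.length)) •
            (List.ofFn fun j : Fin c.length => pSum x (blockSum u c j)).prod := by
  rw [PPoly_eq_B x r u, B_eq_RHSl, RHSl_cast x (List.ofFn u) (List.length_ofFn (f := u))]
  refine Finset.sum_congr rfl fun c _ => ?_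
  rw [ofFn_blockSum]
end

section
/- Let ρ be a Lévy measure on ℝ and let p : ℝ → ℝ be continuous with p(0) = 0 and differentiable at 0. Then the transformed measure ρ^p is again a Lévy measure; that is, ρ^p({0}) = 0 and ∫_ℝ min(1, x²) dρ^p(x) < ∞ (equivalently, ∫_ℝ min(1, p(x)²) dρ(x) < ∞). -/
open MeasureTheory

/-- If `ρ` is a Lévy measure on `ℝ` (i.e. `ρ({0}) = 0` and `∫ min(1, x²) dρ < ∞`) and
`p : ℝ → ℝ` is continuous with `p(0) = 0`, differentiable at `0`, then the transformed
measure `ρ^p` (the pushforward under `p` of the restriction of `ρ` to `{x | p x ≠ 0}`)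
is again a Lévy measure. -/
theorem stmt6 (ρ : Measure ℝ) (hρ0 : ρ {0} = 0)
    (hρfin : ∫⁻ x, ENNReal.ofReal (min 1 (x ^ 2)) ∂ρ < ⊤)
    (p : ℝ → ℝ) (hp : Continuous p) (hp0 : p 0 = 0) (hp' : DifferentiableAt ℝ p 0) :
    (Measure.map p (ρ.restrict {x | p x ≠ 0})) {0} = 0 ∧
      ∫⁻ y, ENNReal.ofReal (min 1 (y ^ 2)) ∂(Measure.map p (ρ.restrict {x | p x ≠ 0})) < ⊤ := by
  have hpm : Measurable p := hp.measurable
  constructor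
  · rw [Measure.map_apply hpm (measurableSet_singleton 0),
      Measure.restrict_apply (hpm (measurableSet_singleton 0))]
    have : p ⁻¹' {0} ∩ {x | p x ≠ 0} = ∅ := by
      ext x; simp [Set.mem_preimage]
    simp [this]
  · -- bound |p x| ≤ C |x| near 0
    obtain ⟨C, hC⟩ := Asymptotics.isBigO_iff.mp hp'.hasFDerivAt.isBigO_sub
    simp only [hp0, sub_zero, Real.norm_eq_abs] at hC
    obtain ⟨δ, hδpos, hδ⟩ := Metric.eventually_nhds_iff.mp hC
    set M : ℝ := max (max 1 (C ^ 2)) (1 / min 1 (δ ^ 2)) with hM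
    have hmpos : (0 : ℝ) < min 1 (δ ^ 2) := lt_min one_pos (by positivity)
    have key : ∀ x : ℝ, min 1 (p x ^ 2) ≤ M * min 1 (x ^ 2) := by
      intro x
      by_cases hx : |x| < δ
      · have hb : |p x| ≤ C * |x| := by
          have := hδ (by simpa [Real.dist_eq] using hx)
          simpa using this
        have hsq : p x ^ 2 ≤ C ^ 2 * x ^ 2 := by
          have := pow_le_pow_left₀ (abs_nonneg (p x)) hb 2
          calc p x ^ 2 = |p x| ^ 2 := (sq_abs _).symm
            _ ≤ (C * |x|) ^ 2 := this
            _ = C ^ 2 * x ^ 2 := by rw [mul_pow, sq_abs]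
        have h1 : min 1 (p x ^ 2) ≤ max 1 (C ^ 2) * min 1 (x ^ 2) := by
          rcases le_total (x ^ 2) 1 with h | h
          · calc min 1 (p x ^ 2) ≤ p x ^ 2 := min_le_right _ _
              _ ≤ C ^ 2 * x ^ 2 := hsq
              _ ≤ max 1 (C ^ 2) * x ^ 2 := by
                  exact mul_le_mul_of_nonneg_right (le_max_right _ _) (by positivity)
              _ = max 1 (C ^ 2) * min 1 (x ^ 2) := by rw [min_eq_right h]
          · calc min 1 (p x ^ 2) ≤ 1 := min_le_left _ _
              _ ≤ max 1 (C ^ 2) * 1 := by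
                  nlinarith [le_max_left 1 (C ^ 2)]
              _ = max 1 (C ^ 2) * min 1 (x ^ 2) := by rw [min_eq_left h]
        calc min 1 (p x ^ 2) ≤ max 1 (C ^ 2) * min 1 (x ^ 2) := h1
          _ ≤ M * min 1 (x ^ 2) := by
              apply mul_le_mul_of_nonneg_right (le_max_left _ _)
              positivity
      · push_neg at hx
        have hmin : min 1 (δ ^ 2) ≤ min 1 (x ^ 2) := by
          apply min_le_min le_rfl
          calc δ ^ 2 = |δ| ^ 2 := by rw [abs_of_pos hδpos]
            _ ≤ |x| ^ 2 := by exact pow_le_pow_left₀ (abs_nonneg δ) (by simpa [abs_of_pos hδpos] using hx) 2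
            _ = x ^ 2 := sq_abs x
        calc min 1 (p x ^ 2) ≤ 1 := min_le_left _ _
          _ = (1 / min 1 (δ ^ 2)) * min 1 (δ ^ 2) := by field_simp
          _ ≤ (1 / min 1 (δ ^ 2)) * min 1 (x ^ 2) := by
              exact mul_le_mul_of_nonneg_left hmin (by positivity)
          _ ≤ M * min 1 (x ^ 2) := by
              apply mul_le_mul_of_nonneg_right (le_max_right _ _)
              have : (0:ℝ) ≤ min 1 (x ^ 2) := le_min zero_le_one (by positivity)
              exact this
    have hfm : Measurable fun y : ℝ => ENNReal.ofReal (min 1 (y ^ 2)) := by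
      measurability
    rw [lintegral_map hfm hpm]
    calc ∫⁻ x, ENNReal.ofReal (min 1 (p x ^ 2)) ∂(ρ.restrict {x | p x ≠ 0})
        ≤ ∫⁻ x, ENNReal.ofReal (min 1 (p x ^ 2)) ∂ρ :=
          lintegral_mono' Measure.restrict_le_self le_rfl
      _ ≤ ∫⁻ x, ENNReal.ofReal M * ENNReal.ofReal (min 1 (x ^ 2)) ∂ρ := by
          apply lintegral_mono fun x => ?_
          rw [← ENNReal.ofReal_mul (by positivity)]
          exact ENNReal.ofReal_le_ofReal (key x)
      _ = ENNReal.ofReal M * ∫⁻ x, ENNReal.ofReal (min 1 (x ^ 2)) ∂ρ :=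
          lintegral_const_mul' _ _ ENNReal.ofReal_ne_top
      _ < ⊤ := ENNReal.mul_lt_top ENNReal.ofReal_lt_top hρfin
end

section
/- Let ρ be a Lévy measure on ℝ, b ∈ ℝ, and let p : ℝ → ℝ be continuous such that there exists a continuous q : ℝ → ℝ with p(x) = b·x + x²·q(x) for all x ∈ ℝ. Then ∫_ℝ | 1_{0 < |p(x)| ≤ 1}(x)·p(x) − 1_{0 < |x| ≤ 1}(x)·b·x | dρ(x) < ∞. -/
open MeasureTheory

/-- If `ρ` is a Lévy measure on `ℝ`, `b ∈ ℝ`, and `p : ℝ → ℝ` is continuous with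
`p(x) = b·x + x²·q(x)` for some continuous `q`, then
`∫ |1_{0<|p(x)|≤1}·p(x) − 1_{0<|x|≤1}·b·x| dρ(x) < ∞`. -/
theorem stmt8 (ρ : Measure ℝ) (hρ0 : ρ {0} = 0)
    (hρfin : ∫⁻ x, ENNReal.ofReal (min 1 (x ^ 2)) ∂ρ < ⊤)
    (b : ℝ) (p q : ℝ → ℝ) (hp : Continuous p) (hq : Continuous q)
    (hpq : ∀ x, p x = b * x + x ^ 2 * q x) :
    ∫⁻ x, ENNReal.ofReal
        |Set.indicator {y : ℝ | 0 < |p y| ∧ |p y| ≤ 1} p x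
          - Set.indicator {y : ℝ | 0 < |y| ∧ |y| ≤ 1} (fun y => b * y) x| ∂ρ < ⊤ := by
  have hp0 : p 0 = 0 := by simpa using hpq 0
  -- continuity of p at 0 gives δ₀
  obtain ⟨δ₀, hδ₀pos, hδ₀⟩ : ∃ δ > 0, ∀ x : ℝ, |x| < δ → |p x| < 1 := by
    have h := Metric.continuousAt_iff.mp (hp.continuousAt (x := 0)) 1 one_pos
    obtain ⟨δ, hδpos, H⟩ := h
    refine ⟨δ, hδpos, fun x hx => ?_⟩
    have := H (x := x) (by simpa [Real.dist_eq] using hx)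
    simpa [Real.dist_eq, hp0] using this
  set δ : ℝ := min δ₀ 1 / 2 with hδdef
  have hδpos : 0 < δ := by positivity
  have hδ1 : δ ≤ 1 := by
    have : min δ₀ 1 ≤ 1 := min_le_right _ _
    simp only [hδdef]; linarith
  have hδlt : δ < δ₀ := by
    have h1 : min δ₀ 1 ≤ δ₀ := min_le_left _ _
    have h2 : 0 < min δ₀ 1 := lt_min hδ₀pos one_pos
    simp only [hδdef]; linarith
  -- bound on q on [-1,1]
  obtain ⟨M, hM⟩ := (isCompact_Icc (a := (-1:ℝ)) (b := 1)).exists_bound_of_continuousOn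
    hq.continuousOn
  set C : ℝ := (1 + |b|) / δ ^ 2 with hCdef
  have hCnn : 0 ≤ C := by positivity
  have hCδ : C * δ ^ 2 = 1 + |b| := div_mul_cancel₀ _ (by positivity)
  set K : ℝ := max M C with hKdef
  have hM0 : 0 ≤ M := by
    have := hM 0 (by norm_num)
    simp only [Real.norm_eq_abs] at this
    exact (abs_nonneg _).trans this
  have hK0 : 0 ≤ K := hM0.trans (le_max_left _ _)
  have key : ∀ x : ℝ, x ≠ 0 →
      |Set.indicator {y : ℝ | 0 < |p y| ∧ |p y| ≤ 1} p x
        - Set.indicator {y : ℝ | 0 < |y| ∧ |y| ≤ 1} (fun y => b * y) x|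
        ≤ K * min 1 (x ^ 2) := by
    intro x hx0
    by_cases hx : |x| ≤ δ
    · have hx1 : |x| ≤ 1 := hx.trans hδ1
      have hpx : |p x| ≤ 1 := le_of_lt (hδ₀ x (lt_of_le_of_lt hx hδlt))
      have hxsq : x ^ 2 ≤ 1 := by nlinarith [sq_abs x, abs_nonneg x]
      have hmin : min 1 (x ^ 2) = x ^ 2 := min_eq_right hxsq
      have hqx : |q x| ≤ M := by
        have hm := abs_le.mp hx1
        have := hM x ⟨hm.1, hm.2⟩
        simpa [Real.norm_eq_abs] using this
      rw [Set.indicator_of_mem (show x ∈ {y : ℝ | 0 < |y| ∧ |y| ≤ 1} from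
        ⟨abs_pos.mpr hx0, hx1⟩)]
      rw [hmin]
      by_cases hpx0 : p x = 0
      · rw [Set.indicator_of_notMem (by simp [Set.mem_setOf_eq, hpx0])]
        have h1 : (0 : ℝ) - b * x = x ^ 2 * q x := by
          have := hpq x; rw [hpx0] at this; linarith
        rw [h1, abs_mul, abs_pow, sq_abs]
        nlinarith [sq_nonneg x, le_max_left M C]
      · rw [Set.indicator_of_mem (show x ∈ {y : ℝ | 0 < |p y| ∧ |p y| ≤ 1} from
          ⟨abs_pos.mpr hpx0, hpx⟩)]
        have h1 : p x - b * x = x ^ 2 * q x := by have := hpq x; linarith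
        rw [h1, abs_mul, abs_pow, sq_abs]
        nlinarith [sq_nonneg x, le_max_left M C]
    · push_neg at hx
      have hmin' : δ ^ 2 ≤ min 1 (x ^ 2) := by
        have h1 : δ ^ 2 ≤ 1 := by nlinarith
        have h2 : δ ^ 2 ≤ x ^ 2 := by nlinarith [abs_nonneg x, sq_abs x]
        exact le_min h1 h2
      have hA : |Set.indicator {y : ℝ | 0 < |p y| ∧ |p y| ≤ 1} p x| ≤ 1 := by
        by_cases hm : x ∈ {y : ℝ | 0 < |p y| ∧ |p y| ≤ 1}
        · rw [Set.indicator_of_mem hm]; exact hm.2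
        · rw [Set.indicator_of_notMem hm]; simp
      have hB : |Set.indicator {y : ℝ | 0 < |y| ∧ |y| ≤ 1} (fun y => b * y) x| ≤ |b| := by
        by_cases hm : x ∈ {y : ℝ | 0 < |y| ∧ |y| ≤ 1}
        · rw [Set.indicator_of_mem hm]
          rw [abs_mul]
          nlinarith [abs_nonneg b, abs_nonneg x, hm.2]
        · rw [Set.indicator_of_notMem hm]; simp
      have habs : |Set.indicator {y : ℝ | 0 < |p y| ∧ |p y| ≤ 1} p x
          - Set.indicator {y : ℝ | 0 < |y| ∧ |y| ≤ 1} (fun y => b * y) x| ≤ 1 + |b| :=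
        (abs_sub _ _).trans (add_le_add hA hB)
      have hKC : C ≤ K := le_max_right _ _
      nlinarith [hmin', hCδ, hCnn, sq_nonneg δ]
  have hae : ∀ᵐ x ∂ρ,
      ENNReal.ofReal
        |Set.indicator {y : ℝ | 0 < |p y| ∧ |p y| ≤ 1} p x
          - Set.indicator {y : ℝ | 0 < |y| ∧ |y| ≤ 1} (fun y => b * y) x|
        ≤ ENNReal.ofReal (K * min 1 (x ^ 2)) := by
    rw [ae_iff]
    refine measure_mono_null (fun x hx => ?_) hρ0
    simp only [Set.mem_setOf_eq, not_le] at hx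
    by_contra hx0
    have hx0' : x ≠ 0 := by simpa using hx0
    exact absurd (ENNReal.ofReal_le_ofReal (key x hx0')) (not_le.mpr hx)
  calc ∫⁻ x, ENNReal.ofReal
        |Set.indicator {y : ℝ | 0 < |p y| ∧ |p y| ≤ 1} p x
          - Set.indicator {y : ℝ | 0 < |y| ∧ |y| ≤ 1} (fun y => b * y) x| ∂ρ
      ≤ ∫⁻ x, ENNReal.ofReal (K * min 1 (x ^ 2)) ∂ρ := lintegral_mono_ae hae
    _ = ENNReal.ofReal K * ∫⁻ x, ENNReal.ofReal (min 1 (x ^ 2)) ∂ρ := by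
        simp_rw [ENNReal.ofReal_mul hK0]
        exact lintegral_const_mul' _ _ ENNReal.ofReal_ne_top
    _ < ⊤ := ENNReal.mul_lt_top ENNReal.ofReal_lt_top hρfin
end

section
/- Let (μ_N)_{N∈ℕ} be Borel probability measures on ℝ, σ a finite Borel measure on ℝ, and γ ∈ ℝ satisfying assumptions (i) and (ii). Let b, c ∈ ℝ and let p, q : ℝ → ℝ be continuous with p(x) = b·x + x²·q(x) for all x and q(0) = c. Then lim_{N→∞} N·∫_ℝ p(x)/(1 + p(x)²) dμ_N(x) = b·γ + ∫_ℝ g_p(x) dσ(x), where g_p(x) = ( p(x) + q(x) − b·(b + x·q(x))·p(x) ) / (1 + p(x)²). -/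
open MeasureTheory Filter

lemma half_bound (t : ℝ) : |t / (1 + t ^ 2)| ≤ 1 / 2 := by
  have h : (0:ℝ) < 1 + t ^ 2 := by positivity
  rw [abs_div, abs_of_pos h, div_le_iff₀ h]
  nlinarith [sq_nonneg (|t| - 1), sq_abs t, abs_nonneg t]

/-- Under the Bercovici–Pata-type assumptions (i) and (ii) on the probability measures
`μ_N`, with `σ` a finite measure and `γ ∈ ℝ`, and `p(x) = b·x + x²·q(x)` with `p, q`
continuous and `q(0) = c`, one has
`N·∫ p(x)/(1 + p(x)²) dμ_N(x) → b·γ + ∫ g_p dσ` where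
`g_p(x) = (p(x) + q(x) − b·(b + x·q(x))·p(x))/(1 + p(x)²)`. -/
theorem stmt9 (μ : ℕ → Measure ℝ) (hμ : ∀ N, IsProbabilityMeasure (μ N))
    (σ : Measure ℝ) [IsFiniteMeasure σ] (γ : ℝ)
    (h1 : ∀ f : ℝ → ℝ, Continuous f → (∃ C, ∀ x, |f x| ≤ C) →
      Tendsto (fun N : ℕ => (N : ℝ) * ∫ x, f x * (x ^ 2 / (1 + x ^ 2)) ∂(μ N))
        atTop (nhds (∫ x, f x ∂σ)))
    (h2 : Tendsto (fun N : ℕ => (N : ℝ) * ∫ x, x / (1 + x ^ 2) ∂(μ N)) atTop (nhds γ))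
    (b c : ℝ) (p q : ℝ → ℝ) (hp : Continuous p) (hq : Continuous q)
    (hpq : ∀ x, p x = b * x + x ^ 2 * q x) (hq0 : q 0 = c) :
    Tendsto (fun N : ℕ => (N : ℝ) * ∫ x, p x / (1 + p x ^ 2) ∂(μ N)) atTop
      (nhds (b * γ +
        ∫ x, (p x + q x - b * (b + x * q x) * p x) / (1 + p x ^ 2) ∂σ)) := by
  have hden : ∀ t : ℝ, (0:ℝ) < 1 + t ^ 2 := fun t => by positivity
  set f : ℝ → ℝ := fun x => (p x + q x - b * (b + x * q x) * p x) / (1 + p x ^ 2) with hf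
  -- key pointwise identity
  have key : ∀ x, p x / (1 + p x ^ 2)
      = b * (x / (1 + x ^ 2)) + f x * (x ^ 2 / (1 + x ^ 2)) := by
    intro x
    have h1x := (hden x).ne'
    have h1p := (hden (p x)).ne'
    simp only [hf]
    have hP := hpq x
    set P := p x with hPdef
    set Q := q x with hQdef
    field_simp
    rw [hP]; ring
  -- continuity of f
  have hfc : Continuous f := by
    apply Continuous.div
    · fun_prop
    · fun_prop
    · exact fun x => (hden (p x)).ne'
  -- boundedness of f
  have hbound : ∃ C, ∀ x, |f x| ≤ C := by
    obtain ⟨M, hM⟩ := (isCompact_Icc (a := (-1:ℝ)) (b := 1)).exists_bound_of_continuousOn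
      hfc.continuousOn
    refine ⟨max M (1 + |b|), fun x => ?_⟩
    by_cases hx : |x| ≤ 1
    · have := hM x (abs_le.mp hx)
      simpa using le_max_of_le_left this
    · push_neg at hx
      refine le_max_of_le_right ?_
      have hx2 : (1:ℝ) ≤ x ^ 2 := by nlinarith [sq_abs x]
      have e2 : (1:ℝ) / 2 ≤ x ^ 2 / (1 + x ^ 2) := by
        rw [div_le_div_iff₀ (by norm_num) (hden x)]
        nlinarith
      have e1 : |f x| * (x ^ 2 / (1 + x ^ 2)) ≤ 1 / 2 + |b| * (1 / 2) := by
        have hid : f x * (x ^ 2 / (1 + x ^ 2))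
            = p x / (1 + p x ^ 2) - b * (x / (1 + x ^ 2)) := by
          have := key x; linarith
        have hnn : (0:ℝ) ≤ x ^ 2 / (1 + x ^ 2) := by positivity
        calc |f x| * (x ^ 2 / (1 + x ^ 2)) = |f x * (x ^ 2 / (1 + x ^ 2))| := by
              rw [abs_mul, abs_of_nonneg hnn]
          _ = |p x / (1 + p x ^ 2) - b * (x / (1 + x ^ 2))| := by rw [hid]
          _ ≤ |p x / (1 + p x ^ 2)| + |b * (x / (1 + x ^ 2))| := abs_sub _ _
          _ ≤ 1 / 2 + |b| * (1 / 2) := by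
              have := half_bound (p x)
              have h2' := half_bound x
              rw [abs_mul]
              gcongr
      nlinarith [abs_nonneg (f x), mul_le_mul_of_nonneg_left e2 (abs_nonneg (f x))]
  -- rewrite the integrals
  have hInt : ∀ N : ℕ, (N:ℝ) * ∫ x, p x / (1 + p x ^ 2) ∂(μ N)
      = b * ((N:ℝ) * ∫ x, x / (1 + x ^ 2) ∂(μ N))
        + (N:ℝ) * ∫ x, f x * (x ^ 2 / (1 + x ^ 2)) ∂(μ N) := by
    intro N
    have := hμ N
    have i1 : Integrable (fun x : ℝ => x / (1 + x ^ 2)) (μ N) := by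
      refine Integrable.mono' (integrable_const (1/2 : ℝ)) ?_ (ae_of_all _ fun x => ?_)
      · exact (Continuous.aestronglyMeasurable (by fun_prop (disch := intros; positivity)))
      · rw [Real.norm_eq_abs]; exact half_bound x
    obtain ⟨C, hC⟩ := hbound
    have i2 : Integrable (fun x : ℝ => f x * (x ^ 2 / (1 + x ^ 2))) (μ N) := by
      refine Integrable.mono' (integrable_const C) ?_ (ae_of_all _ fun x => ?_)
      · exact (Continuous.aestronglyMeasurable (by fun_prop (disch := intros; positivity)))
      · have hnn : |x ^ 2 / (1 + x ^ 2)| ≤ 1 := by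
          rw [abs_of_nonneg (by positivity), div_le_one (hden x)]; nlinarith
        calc ‖f x * (x ^ 2 / (1 + x ^ 2))‖ = |f x| * |x ^ 2 / (1 + x ^ 2)| := by
              rw [Real.norm_eq_abs, abs_mul]
          _ ≤ C * 1 := by
              have h0 : (0:ℝ) ≤ |f x| := abs_nonneg _
              have := hC x
              exact mul_le_mul this hnn (abs_nonneg _) (le_trans h0 this)
          _ = C := mul_one C
    have hcongr : ∫ x, p x / (1 + p x ^ 2) ∂(μ N)
        = ∫ x, (b * (x / (1 + x ^ 2)) + f x * (x ^ 2 / (1 + x ^ 2))) ∂(μ N) :=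
      integral_congr_ae (ae_of_all _ key)
    rw [hcongr, integral_add (i1.const_mul b) i2, integral_const_mul]
    ring
  have hlim := (h2.const_mul b).add (h1 f hfc hbound)
  exact Tendsto.congr (fun N => (hInt N).symm) hlim
end

section
/- Let (μ_N)_{N∈ℕ} be Borel probability measures on ℝ and σ a finite Borel measure on ℝ satisfying assumption (i). Let p, h : ℝ → ℝ be continuous with p(x) = x·h(x) for all x (so p(0) = 0). Then for every bounded continuous f : ℝ → ℝ, lim_{N→∞} N·∫_ℝ f(p(x))·p(x)²/(1 + p(x)²) dμ_N(x) = ∫_ℝ f(p(x))·(p(x)² + h(x)²)/(p(x)² + 1) dσ(x). -/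
open MeasureTheory Filter

private lemma auxPoint (p h : ℝ → ℝ) (hph : ∀ x, p x = x * h x) (f : ℝ → ℝ) (x : ℝ) :
    f (p x) * (p x ^ 2 / (1 + p x ^ 2)) =
      f (p x) * ((p x ^ 2 + h x ^ 2) / (p x ^ 2 + 1)) * (x ^ 2 / (1 + x ^ 2)) := by
  have hp2 : p x = x * h x := hph x
  rw [mul_assoc]
  congr 1
  rw [hp2, div_mul_div_comm, div_eq_div_iff (by positivity) (by positivity)]
  ring

private lemma auxQBound (p h : ℝ → ℝ) (hp : Continuous p) (hh : Continuous h)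
    (hph : ∀ x, p x = x * h x) :
    ∃ K : ℝ, ∀ x : ℝ, (p x ^ 2 + h x ^ 2) / (p x ^ 2 + 1) ≤ K := by
  have hqc : Continuous fun x => (p x ^ 2 + h x ^ 2) / (p x ^ 2 + 1) := by
    apply Continuous.div (by continuity) (by continuity)
    intro x; positivity
  obtain ⟨C', hC'⟩ := (isCompact_Icc (a := (-1:ℝ)) (b := 1)).exists_bound_of_continuousOn
    hqc.continuousOn
  refine ⟨max C' 2, fun x => ?_⟩
  rcases le_or_gt (x ^ 2) 1 with hx | hx
  · have hmem : x ∈ Set.Icc (-1:ℝ) 1 := by constructor <;> nlinarith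
    calc (p x ^ 2 + h x ^ 2) / (p x ^ 2 + 1) ≤ ‖(p x ^ 2 + h x ^ 2) / (p x ^ 2 + 1)‖ :=
          le_abs_self _
      _ ≤ C' := hC' x hmem
      _ ≤ max C' 2 := le_max_left _ _
  · refine le_trans ?_ (le_max_right C' 2)
    rw [div_le_iff₀ (by positivity)]
    have hp2 : p x ^ 2 = x ^ 2 * h x ^ 2 := by rw [hph x]; ring
    nlinarith [sq_nonneg (h x), sq_nonneg (p x)]

/-- Under assumption (i) on the probability measures `μ_N` with `σ` a finite measure,
and `p(x) = x·h(x)` with `p, h` continuous, for every bounded continuous `f : ℝ → ℝ`,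
`N·∫ f(p(x))·p(x)²/(1 + p(x)²) dμ_N(x) → ∫ f(p(x))·(p(x)² + h(x)²)/(p(x)² + 1) dσ(x)`. -/
theorem stmt10 (μ : ℕ → Measure ℝ) (hμ : ∀ N, IsProbabilityMeasure (μ N))
    (σ : Measure ℝ) [IsFiniteMeasure σ]
    (h1 : ∀ f : ℝ → ℝ, Continuous f → (∃ C, ∀ x, |f x| ≤ C) →
      Tendsto (fun N : ℕ => (N : ℝ) * ∫ x, f x * (x ^ 2 / (1 + x ^ 2)) ∂(μ N))
        atTop (nhds (∫ x, f x ∂σ)))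
    (p h : ℝ → ℝ) (hp : Continuous p) (hh : Continuous h)
    (hph : ∀ x, p x = x * h x) :
    ∀ f : ℝ → ℝ, Continuous f → (∃ C, ∀ x, |f x| ≤ C) →
      Tendsto (fun N : ℕ => (N : ℝ) * ∫ x, f (p x) * (p x ^ 2 / (1 + p x ^ 2)) ∂(μ N))
        atTop
        (nhds (∫ x, f (p x) * ((p x ^ 2 + h x ^ 2) / (p x ^ 2 + 1)) ∂σ)) := by
  intro f hf ⟨Cf, hCf⟩
  have hCf0 : 0 ≤ Cf := le_trans (abs_nonneg _) (hCf 0)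
  obtain ⟨K, hK⟩ := auxQBound p h hp hh hph
  have hqnn : ∀ x : ℝ, 0 ≤ (p x ^ 2 + h x ^ 2) / (p x ^ 2 + 1) := fun x => by positivity
  have hgc : Continuous fun x => f (p x) * ((p x ^ 2 + h x ^ 2) / (p x ^ 2 + 1)) := by
    apply (hf.comp hp).mul
    apply Continuous.div (by continuity) (by continuity)
    intro x; positivity
  have hgbd : ∃ C, ∀ x, |f (p x) * ((p x ^ 2 + h x ^ 2) / (p x ^ 2 + 1))| ≤ C := by
    refine ⟨Cf * K, fun x => ?_⟩
    rw [abs_mul, abs_of_nonneg (hqnn x)]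
    exact mul_le_mul (hCf _) (hK x) (hqnn x) hCf0
  have key := h1 (fun x => f (p x) * ((p x ^ 2 + h x ^ 2) / (p x ^ 2 + 1))) hgc hgbd
  have hseq : (fun N : ℕ => (N : ℝ) * ∫ x, f (p x) * (p x ^ 2 / (1 + p x ^ 2)) ∂(μ N)) =
      fun N : ℕ => (N : ℝ) *
        ∫ x, f (p x) * ((p x ^ 2 + h x ^ 2) / (p x ^ 2 + 1)) * (x ^ 2 / (1 + x ^ 2)) ∂(μ N) := by
    funext N
    congr 1
    exact integral_congr_ae (Filter.Eventually.of_forall fun x => auxPoint p h hph f x)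
  rw [hseq]
  exact key
end

section
/- Let σ be a finite Borel measure on ℝ and let p, h : ℝ → ℝ be continuous with p(x) = x·h(x) for all x. Set h_p(x) = (p(x)² + h(x)²)/(p(x)² + 1) and let σ^p be the pushforward under p of the measure with density h_p with respect to σ. Then σ^p({0}) = h(0)²·σ({0}). -/
open MeasureTheory

open scoped ENNReal

theorem setLIntegral_eq_mul_measure_singleton {α : Type*} [MeasurableSpace α]
    [MeasurableSingletonClass α] {μ : Measure α} {s : Set α} {f : α → ℝ≥0∞} {a : α}
    (hs : MeasurableSet s) (ha : a ∈ s) (hf : ∀ x ∈ s, x ≠ a → f x = 0) :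
    ∫⁻ x in s, f x ∂μ = f a * μ {a} := by
  calc ∫⁻ x in s, f x ∂μ = ∫⁻ x in s, ({a} : Set α).indicator f x ∂μ := by
        refine setLIntegral_congr_fun hs fun x hx => ?_
        by_cases hxa : x = a
        · simp [hxa]
        · simp [hxa, hf x hx hxa]
    _ = ∫⁻ x in {a}, f x ∂μ := by
        rw [lintegral_indicator (measurableSet_singleton a),
          Measure.restrict_restrict (measurableSet_singleton a),
          Set.inter_eq_left.mpr (Set.singleton_subset_iff.mpr ha)]
    _ = f a * μ {a} := lintegral_singleton f a

theorem stmt11_general (σ : Measure ℝ) (p h : ℝ → ℝ)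
    (hp : Continuous p) (hph : ∀ x, p x = x * h x) :
    (Measure.map p
        (σ.withDensity fun x => ENNReal.ofReal ((p x ^ 2 + h x ^ 2) / (p x ^ 2 + 1)))) {0}
      = ENNReal.ofReal (h 0 ^ 2) * σ {0} := by
  have hp0 : p 0 = 0 := by simp [hph 0]
  have hzeros : MeasurableSet (p ⁻¹' {0}) := hp.measurable (measurableSet_singleton 0)
  rw [Measure.map_apply hp.measurable (measurableSet_singleton 0), withDensity_apply _ hzeros,
    setLIntegral_eq_mul_measure_singleton hzeros (by simpa using hp0)]
  · simp [hp0]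
  · -- off `0`, a zero of `p x = x * h x` is a zero of `h`, so the density vanishes there
    intro x (hpx : p x = 0) hx
    have hhx : h x = 0 := (mul_eq_zero.mp ((hph x).symm.trans hpx)).resolve_left hx
    simp [hpx, hhx]

/-- Let `σ` be a finite Borel measure on `ℝ` and `p, h` continuous with `p(x) = x·h(x)`.
With `h_p(x) = (p(x)² + h(x)²)/(p(x)² + 1)` and `σ^p` the pushforward under `p` of the
measure `h_p·σ`, one has `σ^p({0}) = h(0)²·σ({0})`. -/
theorem stmt11 (σ : Measure ℝ) [IsFiniteMeasure σ] (p h : ℝ → ℝ)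
    (hp : Continuous p) (hh : Continuous h) (hph : ∀ x, p x = x * h x) :
    (Measure.map p
        (σ.withDensity fun x => ENNReal.ofReal ((p x ^ 2 + h x ^ 2) / (p x ^ 2 + 1)))) {0}
      = ENNReal.ofReal (h 0 ^ 2) * σ {0} :=
  stmt11_general σ p h hp hph
end

section
/- Let σ be a finite Borel measure on ℝ and let p, h : ℝ → ℝ be continuous with p(x) = x·h(x) for all x. Set h_p(x) = (p(x)² + h(x)²)/(p(x)² + 1) and let σ^p be the pushforward under p of the measure h_p·σ. Let ρ be the measure with density x ↦ ((1+x²)/x²)·1_{x≠0}(x) with respect to σ, and let ρ' be the measure with density x ↦ ((1+x²)/x²)·1_{x≠0}(x) with respect to σ^p. Then ρ' coincides with the pushforward under p of the restriction of ρ to {x : p(x) ≠ 0}; that is, for every bounded Borel f : ℝ → ℝ, ∫_ℝ f dρ' = ∫_ℝ f(p(x))·1_{p(x)≠0}(x) dρ(x). -/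
open MeasureTheory

lemma MeasureTheory.withDensity_map {α β : Type*} [MeasurableSpace α] [MeasurableSpace β]
    (μ : Measure α) {f : α → β} (hf : Measurable f) {g : β → ENNReal} (hg : Measurable g) :
    (μ.map f).withDensity g = (μ.withDensity (g ∘ f)).map f := by
  ext s hs
  rw [withDensity_apply _ hs, Measure.map_apply hf hs, withDensity_apply _ (hf hs),
    setLIntegral_map hs hg hf, Function.comp_def]

-- The density turning the Khintchine measure of a Lévy–Khintchine representation into its Lévy measure.
noncomputable def levyWeight : ℝ → ENNReal :=
  {y : ℝ | y ≠ 0}.indicator fun y => ENNReal.ofReal ((1 + y ^ 2) / y ^ 2)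

lemma measurable_levyWeight : Measurable levyWeight :=
  (Measurable.ennreal_ofReal (by fun_prop)).indicator (measurableSet_singleton 0).compl

lemma levyWeight_of_ne_zero {y : ℝ} (hy : y ≠ 0) :
    levyWeight y = ENNReal.ofReal ((1 + y ^ 2) / y ^ 2) :=
  Set.indicator_of_mem hy _

lemma levyWeight_zero : levyWeight 0 = 0 :=
  Set.indicator_of_notMem (by simp) _

-- Since `p = x h`, `(p² + h²)(1 + p²) / ((p² + 1) p²) = h² (1 + x²) / (x² h²)`.
lemma mul_levyWeight_comp_eq_indicator {p h : ℝ → ℝ} (hph : ∀ x, p x = x * h x) :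
    ((fun x => ENNReal.ofReal ((p x ^ 2 + h x ^ 2) / (p x ^ 2 + 1))) * levyWeight ∘ p)
      = {x | p x ≠ 0}.indicator levyWeight := by
  funext x
  by_cases hpx : p x = 0
  · rw [Pi.mul_apply, Function.comp_apply, hpx, levyWeight_zero, mul_zero,
      Set.indicator_of_notMem (not_not_intro hpx)]
  obtain ⟨hx, hhx⟩ := mul_ne_zero_iff.mp (hph x ▸ hpx)
  rw [Pi.mul_apply, Function.comp_apply, Set.indicator_of_mem hpx, levyWeight_of_ne_zero hpx,
    levyWeight_of_ne_zero hx, ← ENNReal.ofReal_mul (by positivity), hph x]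
  congr 1
  field_simp
  ring

theorem stmt12_general (σ : Measure ℝ) (p h : ℝ → ℝ)
    (hp : Continuous p) (hh : Continuous h) (hph : ∀ x, p x = x * h x) :
    (Measure.map p
          (σ.withDensity fun x =>
            ENNReal.ofReal ((p x ^ 2 + h x ^ 2) / (p x ^ 2 + 1)))).withDensity
        (fun x => Set.indicator {y : ℝ | y ≠ 0}
          (fun y => ENNReal.ofReal ((1 + y ^ 2) / y ^ 2)) x)
      = Measure.map p
          ((σ.withDensity fun x => Set.indicator {y : ℝ | y ≠ 0}
              (fun y => ENNReal.ofReal ((1 + y ^ 2) / y ^ 2)) x).restrict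
            {x | p x ≠ 0}) := by
  change ((σ.withDensity _).map p).withDensity levyWeight
    = ((σ.withDensity levyWeight).restrict {x | p x ≠ 0}).map p
  have hpm : Measurable p := hp.measurable
  have hhp : Measurable fun x => ENNReal.ofReal ((p x ^ 2 + h x ^ 2) / (p x ^ 2 + 1)) := by
    fun_prop
  have hsupp : MeasurableSet {x | p x ≠ 0} := hpm (measurableSet_singleton 0).compl
  rw [withDensity_map _ hpm measurable_levyWeight,
    ← withDensity_mul _ hhp (measurable_levyWeight.comp hpm), restrict_withDensity hsupp,
    ← withDensity_indicator hsupp, mul_levyWeight_comp_eq_indicator hph]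

/-- Let `σ` be a finite Borel measure on `ℝ` and `p, h` continuous with `p(x) = x·h(x)`.
Let `h_p(x) = (p(x)² + h(x)²)/(p(x)² + 1)` and `σ^p` the pushforward under `p` of `h_p·σ`.
Let `ρ` be the measure with density `x ↦ ((1+x²)/x²)·1_{x≠0}` with respect to `σ`, and
`ρ'` the measure with the same density with respect to `σ^p`. Then `ρ'` is the pushforward
under `p` of the restriction of `ρ` to `{x | p x ≠ 0}`. -/
theorem stmt12 (σ : Measure ℝ) [IsFiniteMeasure σ] (p h : ℝ → ℝ)
    (hp : Continuous p) (hh : Continuous h) (hph : ∀ x, p x = x * h x) :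
    (Measure.map p
          (σ.withDensity fun x =>
            ENNReal.ofReal ((p x ^ 2 + h x ^ 2) / (p x ^ 2 + 1)))).withDensity
        (fun x => Set.indicator {y : ℝ | y ≠ 0}
          (fun y => ENNReal.ofReal ((1 + y ^ 2) / y ^ 2)) x)
      = Measure.map p
          ((σ.withDensity fun x => Set.indicator {y : ℝ | y ≠ 0}
              (fun y => ENNReal.ofReal ((1 + y ^ 2) / y ^ 2)) x).restrict
            {x | p x ≠ 0}) :=
  stmt12_general σ p h hp hh hph
end

section
/- Let b, c ∈ ℝ and let p, q : ℝ → ℝ be continuous with p(x) = b·x + x²·q(x) for all x and q(0) = c. Then the function g_p(x) = ( p(x) + q(x) − b·(b + x·q(x))·p(x) ) / (1 + p(x)²) is continuous and bounded on ℝ, and g_p(0) = c. -/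
/-! For `x ≠ 0`, eliminating `q x = (p x - b x) / x²` collapses the numerator, and
`g_p(x) = (1 + x⁻²) · p(x) / (1 + p(x)²) - b / x`. Since `|P / (1 + P²)| ≤ 1/2`, this gives
`|g_p(x)| ≤ 1 + |b|` for `|x| ≥ 1`, while on `[-1, 1]` the continuous `g_p` is bounded by
compactness. -/

lemma abs_div_one_add_sq_le_half (P : ℝ) : |P / (1 + P ^ 2)| ≤ 1 / 2 := by
  have hd : (0 : ℝ) < 1 + P ^ 2 := by positivity
  rw [abs_div, abs_of_pos hd, div_le_div_iff₀ hd two_pos]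
  nlinarith [sq_nonneg (|P| - 1), sq_abs P]

lemma div_one_add_sq_eq_of_eq_mul_add_sq_mul {b x P Q : ℝ} (hx : x ≠ 0)
    (hP : P = b * x + x ^ 2 * Q) :
    (P + Q - b * (b + x * Q) * P) / (1 + P ^ 2) = (1 + (x ^ 2)⁻¹) * (P / (1 + P ^ 2)) - b / x := by
  have hQ : Q = (P - b * x) / x ^ 2 := by
    rw [hP]
    field_simp
    ring
  subst hQ
  field_simp
  ring

lemma abs_div_one_add_sq_le_of_one_le_abs {b x P Q : ℝ} (hx : 1 ≤ |x|)
    (hP : P = b * x + x ^ 2 * Q) :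
    |(P + Q - b * (b + x * Q) * P) / (1 + P ^ 2)| ≤ 1 + |b| := by
  have hx0 : x ≠ 0 := by
    rintro rfl
    norm_num at hx
  have hinv : |1 + (x ^ 2)⁻¹| ≤ 2 := by
    have : (x ^ 2)⁻¹ ≤ 1 := inv_le_one_of_one_le₀ (by nlinarith [sq_abs x])
    rw [abs_of_pos (by positivity)]
    linarith
  have hbx : |b / x| ≤ |b| := by
    rw [abs_div]
    exact div_le_self (abs_nonneg b) hx
  rw [div_one_add_sq_eq_of_eq_mul_add_sq_mul hx0 hP]
  calc |(1 + (x ^ 2)⁻¹) * (P / (1 + P ^ 2)) - b / x|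
      ≤ |1 + (x ^ 2)⁻¹| * |P / (1 + P ^ 2)| + |b / x| := by
        rw [← abs_mul]
        exact abs_sub _ _
    _ ≤ 2 * (1 / 2) + |b| := by
        gcongr
        exact abs_div_one_add_sq_le_half P
    _ = 1 + |b| := by ring

lemma Continuous.exists_bound_of_bound_compl {X E : Type*} [TopologicalSpace X]
    [SeminormedAddCommGroup E] {f : X → E} (hf : Continuous f) {K : Set X} (hK : IsCompact K)
    {M : ℝ} (hM : ∀ x ∉ K, ‖f x‖ ≤ M) : ∃ C, ∀ x, ‖f x‖ ≤ C := by
  obtain ⟨C, hC⟩ := hK.exists_bound_of_continuousOn hf.continuousOn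
  refine ⟨max C M, fun x => ?_⟩
  by_cases hx : x ∈ K
  · exact le_max_of_le_left (hC x hx)
  · exact le_max_of_le_right (hM x hx)

theorem stmt13_general (b c : ℝ) (p q : ℝ → ℝ) (hq : Continuous q)
    (hpq : ∀ x, p x = b * x + x ^ 2 * q x) (hq0 : q 0 = c) :
    Continuous (fun x => (p x + q x - b * (b + x * q x) * p x) / (1 + p x ^ 2)) ∧
      (∃ C, ∀ x, |(p x + q x - b * (b + x * q x) * p x) / (1 + p x ^ 2)| ≤ C) ∧
      (p 0 + q 0 - b * (b + 0 * q 0) * p 0) / (1 + p 0 ^ 2) = c := by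
  have hp : Continuous p := by
    rw [funext hpq]
    fun_prop
  have hg : Continuous (fun x => (p x + q x - b * (b + x * q x) * p x) / (1 + p x ^ 2)) :=
    Continuous.div (by fun_prop) (by fun_prop) fun x => by positivity
  refine ⟨hg, ?_, ?_⟩
  · simp only [← Real.norm_eq_abs]
    refine hg.exists_bound_of_bound_compl (isCompact_Icc (a := -1) (b := 1)) (M := 1 + |b|)
      fun x hx => ?_
    have hx : 1 < |x| := not_le.mp (mt abs_le.mp hx)
    exact abs_div_one_add_sq_le_of_one_le_abs hx.le (hpq x)
  · have hp0 : p 0 = 0 := by simp [hpq 0]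
    rw [hp0, hq0]
    ring

/-- If `p, q : ℝ → ℝ` are continuous with `p(x) = b·x + x²·q(x)` and `q(0) = c`, then
`g_p(x) = (p(x) + q(x) − b·(b + x·q(x))·p(x))/(1 + p(x)²)` is continuous and bounded
on `ℝ`, and `g_p(0) = c`. -/
theorem stmt13 (b c : ℝ) (p q : ℝ → ℝ) (hp : Continuous p) (hq : Continuous q)
    (hpq : ∀ x, p x = b * x + x ^ 2 * q x) (hq0 : q 0 = c) :
    Continuous (fun x => (p x + q x - b * (b + x * q x) * p x) / (1 + p x ^ 2)) ∧
      (∃ C, ∀ x, |(p x + q x - b * (b + x * q x) * p x) / (1 + p x ^ 2)| ≤ C) ∧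
      (p 0 + q 0 - b * (b + 0 * q 0) * p 0) / (1 + p 0 ^ 2) = c :=
  stmt13_general b c p q hq hpq hq0
end
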